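/- Let β = (β_n) be a Cantor real base. The quasi-greedy β-expansion d*_β(1) is a β-representation of 1, i.e., val_β(d*_β(1)) = 1. -/

import Mathlib

open Filter

/-- Product of the first `n+1` terms of the base sequence. -/
noncomputable def cprod (β : ℕ → ℝ) (n : ℕ) : ℝ := ∏ i ∈ Finset.range (n+1), β i

/-- A Cantor real base: all terms exceed 1 and the partial products tend to infinity. -/
def IsCantorBase (β : ℕ → ℝ) : Prop :=
  (∀ n, 1 < β n) ∧ Tendsto (cprod β) atTop atTop

/-- Value of a real-digit sequence in a Cantor base. -/
noncomputable def valB (β : ℕ → ℝ) (a : ℕ → ℝ) : ℝ := ∑' n, a n / cprod β n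

/-- Value of a natural-digit sequence in a Cantor base. -/
noncomputable def valN (β : ℕ → ℝ) (a : ℕ → ℕ) : ℝ := valB β (fun n => (a n : ℝ))

/-- Remainders of the greedy algorithm. -/
noncomputable def greedyRem (β : ℕ → ℝ) (x : ℝ) : ℕ → ℝ
  | 0 => β 0 * x - ⌊β 0 * x⌋
  | n+1 => β (n+1) * greedyRem β x n - ⌊β (n+1) * greedyRem β x n⌋

/-- Digits of the greedy expansion. -/
noncomputable def greedy (β : ℕ → ℝ) (x : ℝ) : ℕ → ℕ
  | 0 => (⌊β 0 * x⌋).toNat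
  | n+1 => (⌊β (n+1) * greedyRem β x n⌋).toNat

/-- Remainders of the quasi-greedy algorithm started at `1`:
at each step the largest digit keeping the remainder strictly positive is chosen. -/
noncomputable def qRem (β : ℕ → ℝ) : ℕ → ℝ
  | 0 => β 0 - (⌈β 0⌉ - 1)
  | n+1 => β (n+1) * qRem β n - (⌈β (n+1) * qRem β n⌉ - 1)

/-- Digits of the quasi-greedy expansion of `1`. -/
noncomputable def quasiGreedy (β : ℕ → ℝ) : ℕ → ℕ
  | 0 => (⌈β 0⌉ - 1).toNat
  | n+1 => (⌈β (n+1) * qRem β n⌉ - 1).toNat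

/-- The `n`-shifted base `β^{(n)}`. -/
def shiftBase (β : ℕ → ℝ) (n : ℕ) : ℕ → ℝ := fun k => β (n + k)

/-- The `n`-fold shift `σ^n` of a digit sequence. -/
def shiftSeq (a : ℕ → ℕ) (n : ℕ) : ℕ → ℕ := fun k => a (n + k)

/-- Strict lexicographic order on digit sequences. -/
def LexLt (a b : ℕ → ℕ) : Prop := ∃ ℓ, (∀ k, k < ℓ → a k = b k) ∧ a ℓ < b ℓ

/-- Lexicographic order on digit sequences. -/
def LexLe (a b : ℕ → ℕ) : Prop := LexLt a b ∨ a = b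

/-- The set of greedy expansions of points of `[0,1)`. -/
def Dset (β : ℕ → ℝ) : Set (ℕ → ℕ) := {a | ∃ x ∈ Set.Ico (0:ℝ) 1, a = greedy β x}


/-!
The quasi-greedy algorithm maintains the invariant
`d₀/β₀ + ⋯ + dₙ/(β₀⋯βₙ) = 1 - rₙ/(β₀⋯βₙ)`, where the remainder `rₙ = qRem β n` lies in `(0, 1]`
because the digit chosen for the current value `x > 0` is `⌈x⌉ - 1`. Since `β₀⋯βₙ → ∞`, the error term
tends to `0`, and the nonnegative series of digits sums to `1`.
-/

open Topology

lemma sub_ceil_sub_one_mem_Ioc (x : ℝ) : x - (⌈x⌉ - 1) ∈ Set.Ioc 0 1 :=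
  ⟨by linarith [Int.ceil_lt_add_one x], by linarith [Int.le_ceil x]⟩

lemma natCast_toNat_ceil_sub_one {x : ℝ} (hx : 0 < x) : ((⌈x⌉ - 1).toNat : ℝ) = ⌈x⌉ - 1 := by
  have : 0 < ⌈x⌉ := Int.ceil_pos.mpr hx
  rw [← Int.cast_natCast, Int.toNat_of_nonneg (by omega), Int.cast_sub, Int.cast_one]

lemma qRem_mem_Ioc (β : ℕ → ℝ) (n : ℕ) : qRem β n ∈ Set.Ioc 0 1 := by
  cases n with
  | zero => exact sub_ceil_sub_one_mem_Ioc _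
  | succ n => exact sub_ceil_sub_one_mem_Ioc _

lemma quasiGreedy_zero_eq {β : ℕ → ℝ} (hβ : 0 < β 0) :
    (quasiGreedy β 0 : ℝ) = β 0 - qRem β 0 := by
  rw [quasiGreedy, qRem, natCast_toNat_ceil_sub_one hβ]
  ring

lemma quasiGreedy_succ_eq {β : ℕ → ℝ} {n : ℕ} (hβ : 0 < β (n + 1)) :
    (quasiGreedy β (n + 1) : ℝ) = β (n + 1) * qRem β n - qRem β (n + 1) := by
  rw [quasiGreedy, qRem, natCast_toNat_ceil_sub_one (mul_pos hβ (qRem_mem_Ioc β n).1)]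
  ring

lemma cprod_zero (β : ℕ → ℝ) : cprod β 0 = β 0 := by
  simp [cprod]

lemma cprod_succ (β : ℕ → ℝ) (n : ℕ) : cprod β (n + 1) = cprod β n * β (n + 1) :=
  Finset.prod_range_succ _ _

lemma cprod_pos {β : ℕ → ℝ} (hβ : ∀ n, 0 < β n) (n : ℕ) : 0 < cprod β n :=
  Finset.prod_pos fun i _ => hβ i

lemma sum_quasiGreedy_div_cprod {β : ℕ → ℝ} (hβ : ∀ n, 0 < β n) (n : ℕ) :
    ∑ k ∈ Finset.range (n + 1), (quasiGreedy β k : ℝ) / cprod β k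
      = 1 - qRem β n / cprod β n := by
  induction n with
  | zero =>
    rw [Finset.sum_range_one, quasiGreedy_zero_eq (hβ 0), cprod_zero]
    field_simp [(hβ 0).ne']
  | succ n ih =>
    rw [Finset.sum_range_succ, ih, quasiGreedy_succ_eq (hβ (n + 1)), cprod_succ]
    field_simp [(cprod_pos hβ n).ne', (hβ (n + 1)).ne']
    ring

lemma tendsto_qRem_div_cprod {β : ℕ → ℝ} (h : Tendsto (cprod β) atTop atTop) :
    Tendsto (fun n => qRem β n / cprod β n) atTop (𝓝 0) := by
  have hinv : Tendsto (fun n => (cprod β n)⁻¹) atTop (𝓝 0) := h.inv_tendsto_atTop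
  refine squeeze_zero' ?_ ?_ hinv
  · filter_upwards [h.eventually_gt_atTop 0] with n hn
    exact div_nonneg (qRem_mem_Ioc β n).1.le hn.le
  · filter_upwards [h.eventually_gt_atTop 0] with n hn
    rw [div_eq_mul_inv]
    exact mul_le_of_le_one_left (inv_nonneg.mpr hn.le) (qRem_mem_Ioc β n).2

lemma hasSum_quasiGreedy_div_cprod {β : ℕ → ℝ} (hβ : IsCantorBase β) :
    HasSum (fun n => (quasiGreedy β n : ℝ) / cprod β n) 1 := by
  have hpos : ∀ n, 0 < β n := fun n => one_pos.trans (hβ.1 n)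
  rw [hasSum_iff_tendsto_nat_of_nonneg fun n => div_nonneg (Nat.cast_nonneg _) (cprod_pos hpos n).le,
    ← tendsto_add_atTop_iff_nat 1]
  have hlim := (tendsto_qRem_div_cprod hβ.2).const_sub (1 : ℝ)
  rw [sub_zero] at hlim
  exact hlim.congr fun n => (sum_quasiGreedy_div_cprod hpos n).symm

theorem stmt_11 (β : ℕ → ℝ) (hβ : IsCantorBase β) :
    Summable (fun n => (quasiGreedy β n : ℝ) / cprod β n) ∧ valN β (quasiGreedy β) = 1 :=
  ⟨(hasSum_quasiGreedy_div_cprod hβ).summable, (hasSum_quasiGreedy_div_cprod hβ).tsum_eq⟩
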